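/- Let X be a Banach space with a Schauder basis. Then AD(X) = sup_{n∈ℕ} D_n(X), where the supremum is taken over all natural numbers n (regarded as ordinals in ω₁ + 1). -/

import Mathlib

open Filter Topology

noncomputable section

/-- The first uncountable ordinal `ω₁`. -/
def omega1 : Ordinal := (Cardinal.aleph 1).ord

/-- The combinatorial operation `𝓕[𝓖]` on families of finite subsets of `ℕ`:
all unions `E₁ ∪ ⋯ ∪ Eₙ` with `E₁ < ⋯ < Eₙ` nonempty members of `𝓖` and
`(min Eᵢ)ᵢ ∈ 𝓕`. -/
def famOp (F G : Set (Finset ℕ)) : Set (Finset ℕ) :=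
  {E | ∃ (n : ℕ) (Es : ℕ → Finset ℕ),
    (∀ i < n, Es i ∈ G) ∧ (∀ i < n, (Es i).Nonempty) ∧
    (∀ i j : ℕ, i < j → j < n → ∀ a ∈ Es i, ∀ b ∈ Es j, a < b) ∧
    (Finset.image (fun i => sInf ((Es i : Set ℕ))) (Finset.range n) ∈ F) ∧
    E = (Finset.range n).biUnion Es}

/-- The first Schreier family `𝓢₁ = {E : |E| ≤ min E}`. -/
def schreierOne : Set (Finset ℕ) := {E : Finset ℕ | ∀ n ∈ E, E.card ≤ n}

/-- A system of Schreier families `(𝓢_ξ)` together with the fixed cofinal sequences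
`(ξ_n)` used at countable limit ordinals: `𝓢_0 = {∅} ∪ {{n} : n ∈ ℕ}`,
`𝓢_{ξ+1} = 𝓢₁[𝓢_ξ]`, and at a countable limit `ξ`,
`𝓢_ξ = {E : ∃ n, n ≤ min E ∧ E ∈ 𝓢_{ξ_n}}` where `ξ_n ↑ ξ` and
`𝓢_{ξ_n} ⊆ 𝓢_{ξ_{n+1}}`. -/
structure SchreierSystem where
  S : Ordinal → Set (Finset ℕ)
  seq : Ordinal → ℕ → Ordinal
  S_zero : S 0 = {E : Finset ℕ | E = ∅ ∨ ∃ n : ℕ, E = {n}}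
  S_succ : ∀ ξ : Ordinal, S (ξ + 1) = famOp schreierOne (S ξ)
  seq_strictMono : ∀ ξ : Ordinal, ξ < omega1 → Order.IsSuccLimit ξ → StrictMono (seq ξ)
  seq_lt : ∀ ξ : Ordinal, ξ < omega1 → Order.IsSuccLimit ξ → ∀ n : ℕ, seq ξ n < ξ
  seq_iSup : ∀ ξ : Ordinal, ξ < omega1 → Order.IsSuccLimit ξ → (⨆ n : ℕ, seq ξ n) = ξ
  S_seq_mono : ∀ ξ : Ordinal, ξ < omega1 → Order.IsSuccLimit ξ → ∀ n : ℕ, S (seq ξ n) ⊆ S (seq ξ (n + 1))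
  S_limit : ∀ ξ : Ordinal, ξ < omega1 → Order.IsSuccLimit ξ →
    S ξ = {E : Finset ℕ | ∃ n : ℕ, (∀ m ∈ E, n ≤ m) ∧ E ∈ S (seq ξ n)}

section Distortion

variable {V : Type*} [NormedAddCommGroup V] [NormedSpace ℝ V]

/-- `e` is a Schauder basis of `V`: every vector has a unique expansion
`x = Σ_i a i • e i` (convergence of the partial sums in norm). -/
def IsSchauderBasis (e : ℕ → V) : Prop :=
  ∀ x : V, ∃! a : ℕ → ℝ,
    Filter.Tendsto (fun n => ∑ i ∈ Finset.range n, a i • e i) Filter.atTop (nhds x)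

/-- `u` is a block sequence of `e`: a sequence of nonzero vectors belonging to the spans
of successive finite subsets of the basis. -/
def IsBlockSeqOf (e : ℕ → V) (u : ℕ → V) : Prop :=
  (∀ n, u n ≠ 0) ∧ ∃ E : ℕ → Finset ℕ,
    (∀ m n : ℕ, m < n → ∀ i ∈ E m, ∀ j ∈ E n, i < j) ∧
    ∀ n, u n ∈ Submodule.span ℝ (e '' (E n : Set ℕ))

/-- The closed linear span of the sequence `e` (the space with basis `e`). -/
def spanClosure (e : ℕ → V) : Set V :=
  closure ((Submodule.span ℝ (Set.range e) : Submodule ℝ V) : Set V)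

/-- `N` is (the restriction to `Xs` of) a norm equivalent to `‖·‖` on `Xs`. -/
def IsEquivNormOn (Xs : Set V) (N : V → ℝ) : Prop :=
  (∀ x ∈ Xs, ∀ y ∈ Xs, N (x + y) ≤ N x + N y) ∧
  (∀ (a : ℝ), ∀ x ∈ Xs, N (a • x) = |a| * N x) ∧
  (∃ c C : ℝ, 0 < c ∧ 0 < C ∧ ∀ x ∈ Xs, c * ‖x‖ ≤ N x ∧ N x ≤ C * ‖x‖)

/-- `N` is a `t`-`𝓕` distortion of the space with basis `e`: an equivalent norm such that
every normalized block sequence `(u_i)` admits `E ∈ 𝓕` and vectors `v, w` in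
`span{u_i : i ∈ E}` with `‖v‖ = ‖w‖ = 1` and `N v / N w > t`. -/
def IsFamDistortion (e : ℕ → V) (F : Set (Finset ℕ)) (t : ℝ) (N : V → ℝ) : Prop :=
  IsEquivNormOn (spanClosure e) N ∧
  ∀ u : ℕ → V, IsBlockSeqOf e u → (∀ n, ‖u n‖ = 1) →
    ∃ E : Finset ℕ, E ∈ F ∧ ∃ v w : V,
      v ∈ Submodule.span ℝ (u '' (E : Set ℕ)) ∧ w ∈ Submodule.span ℝ (u '' (E : Set ℕ)) ∧
      ‖v‖ = 1 ∧ ‖w‖ = 1 ∧ t * N w < N v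

/-- The space with basis `e` is `t`-distortable: some equivalent norm witnesses, on every
normalized block sequence, a ratio `> t` on some pair of normalized vectors of the span of
finitely many of its terms. -/
def IsTDistortable (e : ℕ → V) (t : ℝ) : Prop :=
  ∃ N : V → ℝ, IsEquivNormOn (spanClosure e) N ∧
    ∀ u : ℕ → V, IsBlockSeqOf e u → (∀ n, ‖u n‖ = 1) →
      ∃ E : Finset ℕ, ∃ v w : V,
        v ∈ Submodule.span ℝ (u '' (E : Set ℕ)) ∧ w ∈ Submodule.span ℝ (u '' (E : Set ℕ)) ∧
        ‖v‖ = 1 ∧ ‖w‖ = 1 ∧ t * N w < N v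

/-- The distortion index `D_t`: the least countable `ξ` such that the space with basis `e`
is `t`-`𝓢_ξ` distortable, and `ω₁` if there is no such `ξ`. -/
def Dt (SS : SchreierSystem) (e : ℕ → V) (t : ℝ) : Ordinal :=
  sInf ({ξ : Ordinal | ξ < omega1 ∧ ∃ N : V → ℝ, IsFamDistortion e (SS.S ξ) t N} ∪ {omega1})

/-- The index `AD`: the least countable `ξ` such that the space with basis `e` is
`𝓢_ξ` arbitrarily distortable (i.e. `t`-`𝓢_ξ` distortable for every `t ≥ 1`),
and `ω₁` if there is no such `ξ`. -/
def ADidx (SS : SchreierSystem) (e : ℕ → V) : Ordinal :=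
  sInf ({ξ : Ordinal | ξ < omega1 ∧
    ∀ t : ℝ, 1 ≤ t → ∃ N : V → ℝ, IsFamDistortion e (SS.S ξ) t N} ∪ {omega1})

end Distortion

/-!
The Schreier families are invariant under shifts and increase with the index up to finitely
many initial integers: for `ξ ≤ ζ < ω₁` there is `k` with `{E ∈ 𝓢_ξ : k ≤ min E} ⊆ 𝓢_ζ`.
Applying a `t`-`𝓢_ξ` distortion to the tail `(u_{i+k})` of a block sequence therefore gives
a `t`-`𝓢_ζ` distortion, so `D_t ≤ ζ` iff the space is `t`-`𝓢_ζ` distortable, and likewise for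
`AD`. Since a `t`-distortion is an `s`-distortion for `s ≤ t`, `AD ≤ ζ` iff `D_n ≤ ζ` for all
`n`.
-/

def IsShiftClosed (F : Set (Finset ℕ)) : Prop :=
  ∀ k : ℕ, ∀ E ∈ F, E.image (· + k) ∈ F

lemma isShiftClosed_schreierOne : IsShiftClosed schreierOne := by
  intro k E hE m hm
  obtain ⟨m', hm', rfl⟩ := Finset.mem_image.mp hm
  exact Finset.card_image_le.trans ((hE m' hm').trans (Nat.le_add_right m' k))

lemma sInf_image_add (E : Finset ℕ) (hE : E.Nonempty) (k : ℕ) :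
    sInf ((E.image (· + k) : Finset ℕ) : Set ℕ) = sInf (E : Set ℕ) + k := by
  rw [Finset.coe_image]
  exact (Set.Finite.map_sInf_of_monotone (fun _ _ h => Nat.add_le_add_right h k)
    (Finset.coe_nonempty.mpr hE) E.finite_toSet).symm

lemma IsShiftClosed.famOp {F G : Set (Finset ℕ)} (hF : IsShiftClosed F)
    (hG : IsShiftClosed G) : IsShiftClosed (famOp F G) := by
  rintro k E ⟨n, Es, hEsG, hEsne, hEslt, hmin, rfl⟩
  refine ⟨n, fun i => (Es i).image (· + k), fun i hi => hG k _ (hEsG i hi),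
    fun i hi => (hEsne i hi).image _, ?_, ?_, Finset.biUnion_image⟩
  · intro i j hij hj a ha b hb
    obtain ⟨a', ha', rfl⟩ := Finset.mem_image.mp ha
    obtain ⟨b', hb', rfl⟩ := Finset.mem_image.mp hb
    exact Nat.add_lt_add_right (hEslt i j hij hj a' ha' b' hb') k
  · convert hF k _ hmin using 1
    rw [Finset.image_image]
    refine Finset.image_congr fun i hi => ?_
    exact sInf_image_add (Es i) (hEsne i (Finset.mem_range.mp hi)) k

lemma mem_famOp_schreierOne_of_mem {G : Set (Finset ℕ)} {E : Finset ℕ} (hE : E ∈ G)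
    (hpos : ∀ m ∈ E, 1 ≤ m) : E ∈ famOp schreierOne G := by
  rcases E.eq_empty_or_nonempty with rfl | hne
  · exact ⟨0, fun _ => ∅, by simp, by simp, by simp, by simp [schreierOne], by simp⟩
  refine ⟨1, fun _ => E, fun _ _ => hE, fun _ _ => hne, by omega, ?_, by simp⟩
  simp only [Finset.range_one, Finset.image_singleton]
  intro m hm
  rw [Finset.mem_singleton.mp hm, Finset.card_singleton]
  exact hpos _ (Finset.mem_coe.mp (Nat.sInf_mem (Finset.coe_nonempty.mpr hne)))

namespace SchreierSystem

variable (SS : SchreierSystem)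

lemma isShiftClosed_S {ξ : Ordinal} (hξ : ξ < omega1) : IsShiftClosed (SS.S ξ) := by
  induction ξ using Ordinal.limitRecOn with
  | zero =>
    rintro k E hE
    rw [SS.S_zero] at hE ⊢
    rcases hE with rfl | ⟨n, rfl⟩
    · exact Or.inl rfl
    · exact Or.inr ⟨n + k, by simp⟩
  | add_one η ih =>
    rw [SS.S_succ]
    exact isShiftClosed_schreierOne.famOp (ih ((lt_add_one η).trans hξ))
  | limit η hlim ih =>
    rintro k E hE
    rw [SS.S_limit η hξ hlim] at hE ⊢
    obtain ⟨n, hmin, hEn⟩ := hE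
    refine ⟨n, fun m hm => ?_, ih _ (SS.seq_lt η hξ hlim n)
      ((SS.seq_lt η hξ hlim n).trans hξ) k E hEn⟩
    obtain ⟨m', hm', rfl⟩ := Finset.mem_image.mp hm
    exact (hmin m' hm').trans (Nat.le_add_right m' k)

lemma exists_tail_subset_of_le {ζ : Ordinal} (hζ : ζ < omega1) {ξ : Ordinal} (hξζ : ξ ≤ ζ) :
    ∃ k : ℕ, ∀ E ∈ SS.S ξ, (∀ m ∈ E, k ≤ m) → E ∈ SS.S ζ := by
  induction ζ using Ordinal.limitRecOn generalizing ξ with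
  | zero => exact ⟨0, fun E hE _ => nonpos_iff_eq_zero.mp hξζ ▸ hE⟩
  | add_one η ih =>
    rcases hξζ.eq_or_lt with rfl | hξζ
    · exact ⟨0, fun E hE _ => hE⟩
    obtain ⟨k, hk⟩ := ih ((lt_add_one η).trans hζ) (Order.lt_add_one_iff.mp hξζ)
    refine ⟨max k 1, fun E hE hmin => ?_⟩
    rw [SS.S_succ]
    exact mem_famOp_schreierOne_of_mem (hk E hE fun m hm => le_of_max_le_left (hmin m hm))
      fun m hm => le_of_max_le_right (hmin m hm)
  | limit η hlim ih =>
    rcases hξζ.eq_or_lt with rfl | hξζ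
    · exact ⟨0, fun E hE _ => hE⟩
    rw [← SS.seq_iSup η hζ hlim, Ordinal.lt_iSup_iff] at hξζ
    obtain ⟨n, hn⟩ := hξζ
    have hseq := SS.seq_lt η hζ hlim n
    obtain ⟨k, hk⟩ := ih _ hseq (hseq.trans hζ) hn.le
    refine ⟨max k n, fun E hE hmin => ?_⟩
    rw [SS.S_limit η hζ hlim]
    exact ⟨n, fun m hm => le_of_max_le_right (hmin m hm),
      hk E hE fun m hm => le_of_max_le_left (hmin m hm)⟩

end SchreierSystem

section Distortion

variable {V : Type*} [NormedAddCommGroup V] [NormedSpace ℝ V] {e u : ℕ → V}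

lemma IsBlockSeqOf.comp_add_right (hu : IsBlockSeqOf e u) (k : ℕ) :
    IsBlockSeqOf e (fun i => u (i + k)) := by
  obtain ⟨hne, Es, hlt, hspan⟩ := hu
  exact ⟨fun n => hne _, fun n => Es (n + k), fun m n hmn => hlt _ _ (by omega),
    fun n => hspan _⟩

lemma IsBlockSeqOf.span_image_le (hu : IsBlockSeqOf e u) (E : Set ℕ) :
    Submodule.span ℝ (u '' E) ≤ Submodule.span ℝ (Set.range e) := by
  obtain ⟨_, Es, _, hspan⟩ := hu
  rw [Submodule.span_le]
  rintro _ ⟨i, _, rfl⟩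
  exact Submodule.span_mono (Set.image_subset_range e _) (hspan i)

lemma IsFamDistortion.of_le_ratio {F : Set (Finset ℕ)} {t s : ℝ} {N : V → ℝ} (hts : t ≤ s)
    (hd : IsFamDistortion e F s N) : IsFamDistortion e F t N := by
  refine ⟨hd.1, fun u hu hnorm => ?_⟩
  obtain ⟨E, hEF, v, w, hv, hw, hnv, hnw, hlt⟩ := hd.2 u hu hnorm
  refine ⟨E, hEF, v, w, hv, hw, hnv, hnw, lt_of_le_of_lt ?_ hlt⟩
  obtain ⟨-, -, c, C, hc, -, hbound⟩ := hd.1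
  have hwX : w ∈ spanClosure e := subset_closure (hu.span_image_le _ hw)
  have hNw : 0 ≤ N w := (mul_nonneg hc.le (norm_nonneg w)).trans (hbound w hwX).1
  exact mul_le_mul_of_nonneg_right hts hNw

/-- Apply the distortion to the tail `(u (i + k))ᵢ` and shift the set it yields back by `k`. -/
lemma IsFamDistortion.mono_family {F G : Set (Finset ℕ)} {t : ℝ} {N : V → ℝ} {k : ℕ}
    (hF : IsShiftClosed F) (hFG : ∀ E ∈ F, (∀ m ∈ E, k ≤ m) → E ∈ G)
    (hd : IsFamDistortion e F t N) : IsFamDistortion e G t N := by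
  refine ⟨hd.1, fun u hu hnorm => ?_⟩
  obtain ⟨E, hEF, v, w, hv, hw, hnv, hnw, hlt⟩ :=
    hd.2 _ (hu.comp_add_right k) fun n => hnorm (n + k)
  have himage : (fun i => u (i + k)) '' (E : Set ℕ) = u '' (E.image (· + k) : Finset ℕ) := by
    rw [Finset.coe_image, ← Set.image_comp]
    rfl
  rw [himage] at hv hw
  refine ⟨E.image (· + k), hFG _ (hF k E hEF) fun m hm => ?_, v, w, hv, hw, hnv, hnw, hlt⟩
  obtain ⟨m', -, rfl⟩ := Finset.mem_image.mp hm
  exact Nat.le_add_left k m'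

lemma sInf_union_omega1_le {P : Ordinal → Prop} :
    sInf ({ξ | ξ < omega1 ∧ P ξ} ∪ {omega1}) ≤ omega1 :=
  csInf_le' (Set.mem_union_right _ rfl)

lemma sInf_union_omega1_le_iff {P : Ordinal → Prop}
    (hP : ∀ ξ ζ, ξ ≤ ζ → ζ < omega1 → P ξ → P ζ) {ζ : Ordinal} (hζ : ζ < omega1) :
    sInf ({ξ | ξ < omega1 ∧ P ξ} ∪ {omega1}) ≤ ζ ↔ P ζ := by
  refine ⟨fun hle => ?_, fun h => csInf_le' (Set.mem_union_left _ ⟨hζ, h⟩)⟩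
  rcases csInf_mem (s := {ξ | ξ < omega1 ∧ P ξ} ∪ {omega1}) ⟨_, Set.mem_union_right _ rfl⟩
    with ⟨-, hPinf⟩ | hinf
  · exact hP _ ζ hle hζ hPinf
  · exact absurd (hinf ▸ hle) hζ.not_ge

variable (SS : SchreierSystem)

lemma IsFamDistortion.of_schreier_le {ξ ζ : Ordinal} (hξζ : ξ ≤ ζ) (hζ : ζ < omega1) {t : ℝ}
    {N : V → ℝ} (hd : IsFamDistortion e (SS.S ξ) t N) : IsFamDistortion e (SS.S ζ) t N :=
  have ⟨_, hk⟩ := SS.exists_tail_subset_of_le hζ hξζ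
  hd.mono_family (SS.isShiftClosed_S (hξζ.trans_lt hζ)) hk

lemma Dt_le_omega1 (t : ℝ) : Dt SS e t ≤ omega1 := sInf_union_omega1_le

lemma ADidx_le_omega1 : ADidx SS e ≤ omega1 := sInf_union_omega1_le

lemma Dt_le_iff {t : ℝ} {ζ : Ordinal} (hζ : ζ < omega1) :
    Dt SS e t ≤ ζ ↔ ∃ N : V → ℝ, IsFamDistortion e (SS.S ζ) t N :=
  sInf_union_omega1_le_iff (fun _ _ hξζ hζ ⟨N, hN⟩ => ⟨N, hN.of_schreier_le SS hξζ hζ⟩) hζ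

lemma ADidx_le_iff {ζ : Ordinal} (hζ : ζ < omega1) :
    ADidx SS e ≤ ζ ↔ ∀ t : ℝ, 1 ≤ t → ∃ N : V → ℝ, IsFamDistortion e (SS.S ζ) t N :=
  sInf_union_omega1_le_iff (fun _ _ hξζ hζ h t ht =>
    have ⟨N, hN⟩ := h t ht
    ⟨N, hN.of_schreier_le SS hξζ hζ⟩) hζ

end Distortion

theorem statement6_general {X : Type*} [NormedAddCommGroup X] [NormedSpace ℝ X]
    (SS : SchreierSystem) (e : ℕ → X) :
    ADidx SS e = ⨆ n : ℕ, Dt SS e (n : ℝ) := by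
  have hbdd : BddAbove (Set.range fun n : ℕ => Dt SS e n) :=
    ⟨omega1, by rintro _ ⟨n, rfl⟩; exact Dt_le_omega1 SS n⟩
  apply le_antisymm
  · set ζ := ⨆ n : ℕ, Dt SS e n
    rcases lt_or_ge ζ omega1 with hζ | hζ
    · refine (ADidx_le_iff SS hζ).mpr fun t _ => ?_
      obtain ⟨N, hN⟩ := (Dt_le_iff SS hζ).mp (le_ciSup hbdd ⌈t⌉₊)
      exact ⟨N, hN.of_le_ratio (Nat.le_ceil t)⟩
    · exact (ADidx_le_omega1 SS).trans hζ
  · refine ciSup_le fun n => ?_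
    rcases (ADidx_le_omega1 SS (e := e)).lt_or_eq with hAD | hAD
    · obtain ⟨N, hN⟩ := (ADidx_le_iff SS hAD).mp le_rfl (max n 1) (le_max_right _ _)
      exact (Dt_le_iff SS hAD).mpr ⟨N, hN.of_le_ratio (le_max_left _ _)⟩
    · exact hAD ▸ Dt_le_omega1 SS n

/-- For a Banach space `X` with a Schauder basis,
`AD(X) = sup_{n ∈ ℕ} D_n(X)`. -/
theorem statement6 {X : Type*} [NormedAddCommGroup X] [NormedSpace ℝ X] [CompleteSpace X]
    (SS : SchreierSystem) (e : ℕ → X) (he : IsSchauderBasis e) :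
    ADidx SS e = ⨆ n : ℕ, Dt SS e (n : ℝ) :=
  statement6_general SS e
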